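/- Let A = U [[T, S],[0, N]] U* with U unitary, T invertible of size r×r, and N nilpotent with N^k = 0. Then the core-EP inverse of A equals U [[T⁻¹, 0],[0, 0]] U*, i.e., X = U [[T⁻¹,0],[0,0]] U* satisfies XAX = X and range(X) = range(X*) = range(A^D). -/

import Mathlib

/-!
Conjugating by `U`, all three claims become block computations. Ranges are compared through
right divisibility: if `Q = P * C` then `range Q ⊆ range P`. For `l ≥ k + j` the matrix
`Uᴴ A^l U` is `[[T^l, W], [0, 0]]` since `N^l = 0`; it, `[[T⁻¹, 0], [0, 0]]` and the adjoint
`[[T⁻¹ᴴ, 0], [0, 0]]` all have the shape `[[P, Q], [0, 0]]` with `P` invertible, so they divide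
one another. Finally `D = A^l D^(l+1)` and `A^l = D A^(l+1)`, so `D` and `A^l` have one range.
-/

open Matrix

/-- `X` is the Drazin inverse of `A` with respect to the index `k`. -/
def IsDrazin {n : Type*} [Fintype n] [DecidableEq n]
    (A X : Matrix n n ℂ) (k : ℕ) : Prop :=
  A ^ (k + 1) * X = A ^ k ∧ X * A * X = X ∧ A * X = X * A

section Monoid

variable {M : Type*} [Monoid M]

theorem mul_mul_mul_conj {u v : M} (hvu : v * u = 1) (a b : M) :
    u * a * v * (u * b * v) = u * (a * b) * v := by
  simp only [mul_assoc, ← mul_assoc v u, hvu, one_mul]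

theorem conj_dvd_conj {u v : M} (hvu : v * u = 1) {a b : M} (h : a ∣ b) :
    u * a * v ∣ u * b * v := by
  obtain ⟨c, rfl⟩ := h
  exact ⟨u * c * v, (mul_mul_mul_conj hvu a c).symm⟩

theorem pow_succ_mul_pow_of_mul_mul_eq {A D : M} (hD : D * A * D = D) (hAD : Commute A D)
    (t : ℕ) : D ^ (t + 1) * A ^ t = D := by
  induction t with
  | zero => simp
  | succ t ih =>
    calc D ^ (t + 1 + 1) * A ^ (t + 1) = D * A * (D ^ (t + 1) * A ^ t) := by
          rw [pow_succ' D, pow_succ' A, mul_assoc D, ← mul_assoc _ A,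
            ← (hAD.pow_right (t + 1)).eq]
          simp only [mul_assoc]
      _ = D := by rw [ih, hD]

theorem pow_succ_mul_eq_pow_of_le {A D : M} {j l : ℕ} (h : A ^ (j + 1) * D = A ^ j)
    (hl : j ≤ l) : A ^ (l + 1) * D = A ^ l := by
  obtain ⟨d, rfl⟩ := Nat.exists_eq_add_of_le hl
  rw [show j + d + 1 = d + (j + 1) by omega, pow_add, mul_assoc, h, ← pow_add, add_comm]

end Monoid

theorem range_mulVecLin_le_of_dvd {n R : Type*} [Fintype n] [DecidableEq n] [CommSemiring R]
    {P Q : Matrix n n R} (h : P ∣ Q) :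
    LinearMap.range Q.mulVecLin ≤ LinearMap.range P.mulVecLin := by
  obtain ⟨C, rfl⟩ := h
  rw [mulVecLin_mul]
  exact LinearMap.range_comp_le_range _ _

theorem range_mulVecLin_eq_of_dvd_of_dvd {n R : Type*} [Fintype n] [DecidableEq n]
    [CommSemiring R] {P Q : Matrix n n R} (hPQ : P ∣ Q) (hQP : Q ∣ P) :
    LinearMap.range P.mulVecLin = LinearMap.range Q.mulVecLin :=
  le_antisymm (range_mulVecLin_le_of_dvd hQP) (range_mulVecLin_le_of_dvd hPQ)

theorem IsDrazin.range_eq_range_pow {n : Type*} [Fintype n] [DecidableEq n]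
    {A D : Matrix n n ℂ} {j : ℕ} (hD : IsDrazin A D j) {l : ℕ} (hl : j ≤ l) :
    LinearMap.range D.mulVecLin = LinearMap.range (A ^ l).mulVecLin := by
  obtain ⟨h₁, h₂, h₃⟩ := hD
  have hAD : Commute A D := h₃
  refine range_mulVecLin_eq_of_dvd_of_dvd ⟨A ^ (l + 1), ?_⟩ ⟨D ^ (l + 1), ?_⟩
  · rw [← (hAD.pow_left (l + 1)).eq, pow_succ_mul_eq_pow_of_le h₁ hl]
  · rw [(hAD.pow_pow l (l + 1)).eq, pow_succ_mul_pow_of_mul_mul_eq h₂ hAD]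

section Blocks

variable {l m R : Type*} [Fintype l] [Fintype m] [DecidableEq l] [DecidableEq m] [Semiring R]

theorem fromBlocks_zero₂₁_pow (T : Matrix l l R) (S : Matrix l m R) (N : Matrix m m R) (p : ℕ) :
    ∃ W, fromBlocks T S 0 N ^ p = fromBlocks (T ^ p) W 0 (N ^ p) := by
  induction p with
  | zero => exact ⟨0, by simp [fromBlocks_one]⟩
  | succ p ih =>
    obtain ⟨W, hW⟩ := ih
    exact ⟨T ^ p * S + W * N, by simp [pow_succ, hW, fromBlocks_multiply]⟩

theorem fromBlocks_zero_zero_dvd {P : Matrix l l R} (hP : IsUnit P) (Q : Matrix l m R)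
    (P' : Matrix l l R) (Q' : Matrix l m R) :
    fromBlocks P Q (0 : Matrix m l R) 0 ∣ fromBlocks P' Q' 0 0 := by
  obtain ⟨u, rfl⟩ := hP
  exact ⟨fromBlocks ((↑u⁻¹ : Matrix l l R) * P') ((↑u⁻¹ : Matrix l l R) * Q') 0 0, by
    simp [fromBlocks_multiply, ← Matrix.mul_assoc]⟩

end Blocks

theorem stmt_19 {r m : ℕ} (k : ℕ)
    (U : Matrix (Fin r ⊕ Fin m) (Fin r ⊕ Fin m) ℂ)
    (hU : U * Uᴴ = 1 ∧ Uᴴ * U = 1)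
    (T : Matrix (Fin r) (Fin r) ℂ) (hT : IsUnit T)
    (S : Matrix (Fin r) (Fin m) ℂ)
    (N : Matrix (Fin m) (Fin m) ℂ) (hN : N ^ k = 0)
    (A : Matrix (Fin r ⊕ Fin m) (Fin r ⊕ Fin m) ℂ)
    (hA : A = U * Matrix.fromBlocks T S 0 N * Uᴴ)
    (D : Matrix (Fin r ⊕ Fin m) (Fin r ⊕ Fin m) ℂ) (j : ℕ) (hD : IsDrazin A D j) :
    (U * Matrix.fromBlocks T⁻¹ 0 0 0 * Uᴴ) * A * (U * Matrix.fromBlocks T⁻¹ 0 0 0 * Uᴴ)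
        = U * Matrix.fromBlocks T⁻¹ 0 0 0 * Uᴴ ∧
      LinearMap.range (U * Matrix.fromBlocks T⁻¹ 0 0 0 * Uᴴ).mulVecLin
        = LinearMap.range ((U * Matrix.fromBlocks T⁻¹ 0 0 0 * Uᴴ)ᴴ).mulVecLin ∧
      LinearMap.range (U * Matrix.fromBlocks T⁻¹ 0 0 0 * Uᴴ).mulVecLin
        = LinearMap.range D.mulVecLin := by
  have hTT : T⁻¹ * T = 1 := nonsing_inv_mul T ((isUnit_iff_isUnit_det T).mp hT)
  have hTinv : IsUnit T⁻¹ := isUnit_nonsing_inv_iff.mpr hT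
  have hXH : (U * fromBlocks T⁻¹ 0 0 0 * Uᴴ)ᴴ = U * fromBlocks T⁻¹ᴴ 0 0 0 * Uᴴ := by
    simp [conjTranspose_mul, fromBlocks_conjTranspose, Matrix.mul_assoc]
  obtain ⟨W, hW⟩ := fromBlocks_zero₂₁_pow T S N (k + j)
  rw [pow_add N, hN, zero_mul] at hW
  have hApow : A ^ (k + j) = U * fromBlocks (T ^ (k + j)) W 0 0 * Uᴴ := by
    rw [hA, ← hW]
    exact Units.conj_pow ⟨U, Uᴴ, hU.1, hU.2⟩ _ _
  refine ⟨?_, ?_, ?_⟩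
  · rw [hA, mul_mul_mul_conj hU.2, mul_mul_mul_conj hU.2]
    simp [fromBlocks_multiply, hTT]
  · rw [hXH]
    exact range_mulVecLin_eq_of_dvd_of_dvd
      (conj_dvd_conj hU.2 (fromBlocks_zero_zero_dvd hTinv _ _ _))
      (conj_dvd_conj hU.2 (fromBlocks_zero_zero_dvd hTinv.star _ _ _))
  · rw [hD.range_eq_range_pow (Nat.le_add_left j k), hApow]
    exact range_mulVecLin_eq_of_dvd_of_dvd
      (conj_dvd_conj hU.2 (fromBlocks_zero_zero_dvd hTinv _ _ _))
      (conj_dvd_conj hU.2 (fromBlocks_zero_zero_dvd (hT.pow _) _ _ _))
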